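/- There exist pairwise disjoint finite sets R, B, P of points in the plane whose minimum red-blue-purple spanning graph is unique and has a vertex of degree 15. (Such an example is obtained by placing a purple point p at the common center of a regular pentagon of radius 3 with purple points at its corners, a regular pentagon of radius 1 with red points at its corners, and a slightly rotated regular pentagon of radius 1 with blue points at its corners.) -/

import Mathlib

open scoped Classical

noncomputable section

/-- The Euclidean plane. -/
abbrev Pt : Type := EuclideanSpace ℝ (Fin 2)

/-- The simple graph on the plane whose edge set is the finite set `E`. -/
def graphOf (E : Finset (Sym2 Pt)) : SimpleGraph Pt where
  Adj x y := x ≠ y ∧ s(x, y) ∈ E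
  symm := ⟨fun x y ⟨hne, he⟩ => ⟨hne.symm, by rwa [Sym2.eq_swap]⟩⟩
  loopless := ⟨fun x ⟨hne, _⟩ => hne rfl⟩

/-- Euclidean length of an edge. -/
def edgeLen (e : Sym2 Pt) : ℝ :=
  Sym2.lift ⟨fun x y => dist x y, fun _ _ => dist_comm _ _⟩ e

/-- Total Euclidean length of a finite edge set. -/
def weight (E : Finset (Sym2 Pt)) : ℝ := ∑ e ∈ E, edgeLen e

/-- `E` is the edge set of a red-blue-purple spanning graph of `(R, B, P)`. -/
def IsRBP (R B P : Finset Pt) (E : Finset (Sym2 Pt)) : Prop :=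
  (∀ e ∈ E, ¬ e.IsDiag) ∧
  (∀ e ∈ E, ∀ x ∈ e, x ∈ R ∪ B ∪ P) ∧
  ((graphOf E).induce (↑(R ∪ P) : Set Pt)).Connected ∧
  ((graphOf E).induce (↑(B ∪ P) : Set Pt)).Connected

/-- `E` is the edge set of a minimum red-blue-purple spanning graph of `(R, B, P)`. -/
def IsMinRBP (R B P : Finset Pt) (E : Finset (Sym2 Pt)) : Prop :=
  IsRBP R B P E ∧ ∀ E', IsRBP R B P E' → weight E ≤ weight E'


/-!
Let `o` be the central purple point. The star at `o` has weight `∑ dist v o`. In any RBP spanning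
graph, orient a spanning tree of `R ∪ P` and one of `B ∪ P` towards `o` and charge every other
vertex to the edge leading to its parent: a red or blue point `v` with `dist v o`, a purple point
with `dist v o / 2` on each side. Each edge receives at most one charge from each side, and the
geometry of the configuration (on its side, `o` is the strictly nearest neighbour of every point,
and outer purple points are far from everything) makes the charge of an edge at most its length,
with equality only for edges at `o`. Summing, every RBP spanning graph is at least as heavy as
the star, with equality only for the star itself, whose hub has degree `15`.
-/

open Finset

lemma edgeLen_mk (x y : Pt) : edgeLen s(x, y) = dist x y := rfl

lemma edgeLen_nonneg (e : Sym2 Pt) : 0 ≤ edgeLen e := by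
  induction e using Sym2.ind with
  | _ x y =>
    rw [edgeLen_mk]
    exact dist_nonneg

lemma edgeLen_pos {e : Sym2 Pt} (h : ¬ e.IsDiag) : 0 < edgeLen e := by
  induction e using Sym2.ind with
  | _ x y =>
    rw [edgeLen_mk]
    exact dist_pos.mpr (by simpa using h)

lemma SimpleGraph.Reachable.exists_adj_dist_lt {V : Type*} {G : SimpleGraph V} {v o : V}
    (h : G.Reachable v o) (hne : v ≠ o) : ∃ u, G.Adj v u ∧ G.dist u o < G.dist v o := by
  obtain ⟨p, hp⟩ := h.exists_walk_length_eq_dist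
  cases p with
  | nil => exact absurd rfl hne
  | cons hadj q =>
    refine ⟨_, hadj, (SimpleGraph.dist_le q).trans_lt ?_⟩
    rw [← hp, SimpleGraph.Walk.length_cons]
    omega

def IsParentMap (E : Finset (Sym2 Pt)) (o : Pt) (W : Finset Pt) (p : Pt → Pt) : Prop :=
  (∀ v ∈ W.erase o, p v ∈ W ∧ p v ≠ v ∧ s(v, p v) ∈ E) ∧
    Set.InjOn (fun v => s(v, p v)) ↑(W.erase o)

lemma exists_isParentMap {E : Finset (Sym2 Pt)} {o : Pt} {W : Finset Pt} (ho : o ∈ W)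
    (hconn : ((graphOf E).induce (W : Set Pt)).Connected) : ∃ p, IsParentMap E o W p := by
  let rank : Pt → ℕ := fun v =>
    if hv : v ∈ W then ((graphOf E).induce (W : Set Pt)).dist ⟨v, hv⟩ ⟨o, ho⟩ else 0
  have hparent : ∀ v, ∃ u, v ∈ W.erase o → u ∈ W ∧ (graphOf E).Adj v u ∧ rank u < rank v := by
    intro v
    by_cases hv : v ∈ W.erase o
    · obtain ⟨hvo, hvW⟩ := mem_erase.mp hv
      obtain ⟨⟨u, hu⟩, hadj, hlt⟩ := (hconn.preconnected ⟨v, hvW⟩ ⟨o, ho⟩).exists_adj_dist_lt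
        (fun h => hvo (congrArg Subtype.val h))
      refine ⟨u, fun _ => ⟨hu, hadj, ?_⟩⟩
      simp only [rank, dif_pos (show u ∈ W from hu), dif_pos hvW]
      exact hlt
    · exact ⟨v, fun h => absurd h hv⟩
  choose p hp using hparent
  refine ⟨p, fun v hv => ?_, fun v hv w hw hvw => ?_⟩
  · obtain ⟨hu, ⟨hne, hmem⟩, -⟩ := hp v hv
    exact ⟨hu, hne.symm, hmem⟩
  · rcases Sym2.eq_iff.mp hvw with ⟨h, -⟩ | ⟨h₁, h₂⟩
    · exact h
    · -- parents are strictly closer to `o`, so `v` and `w` cannot be each other's parent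
      have hv' := (hp v hv).2.2
      have hw' := (hp w hw).2.2
      rw [h₂] at hv'
      rw [← h₁] at hw'
      omega

section Charging

variable {E : Finset (Sym2 Pt)} {o : Pt} {W W₁ W₂ : Finset Pt} {p p₁ p₂ : Pt → Pt}
  {c : Pt → ℝ}

def IsStarCharge (o : Pt) (W : Finset Pt) (c : Pt → ℝ) : Prop :=
  ∀ v ∈ W.erase o, c v ≤ dist v o ∧ ∀ u ∈ W.erase o, u ≠ v → c v < dist v u

lemma IsStarCharge.le_dist (hc : IsStarCharge o W c) {u v : Pt} (hv : v ∈ W.erase o)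
    (hu : u ∈ W) (huv : u ≠ v) : c v ≤ dist v u ∧ (u ≠ o → c v < dist v u) := by
  by_cases huo : u = o
  · subst huo
    exact ⟨(hc v hv).1, fun h => absurd rfl h⟩
  · have hlt := (hc v hv).2 u (mem_erase.mpr ⟨huo, hu⟩) huv
    exact ⟨hlt.le, fun _ => hlt⟩

def edgeCharge (o : Pt) (W : Finset Pt) (p : Pt → Pt) (c : Pt → ℝ) (e : Sym2 Pt) : ℝ :=
  ∑ v ∈ (W.erase o).filter (fun v => s(v, p v) = e), c v

lemma IsParentMap.edgeCharge_eq_zero_or (hp : IsParentMap E o W p) (c : Pt → ℝ) (e : Sym2 Pt) :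
    edgeCharge o W p c e = 0 ∨
      ∃ v ∈ W.erase o, s(v, p v) = e ∧ edgeCharge o W p c e = c v := by
  rcases ((W.erase o).filter (fun v => s(v, p v) = e)).eq_empty_or_nonempty with h | ⟨v, hv⟩
  · exact Or.inl (by rw [edgeCharge, h, sum_empty])
  · obtain ⟨hvW, hve⟩ := mem_filter.mp hv
    refine Or.inr ⟨v, hvW, hve, ?_⟩
    rw [edgeCharge, eq_singleton_iff_unique_mem.mpr ⟨hv, fun w hw => ?_⟩, sum_singleton]
    obtain ⟨hwW, hwe⟩ := mem_filter.mp hw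
    exact hp.2 hwW hvW (hwe.trans hve.symm)

lemma sum_edgeCharge {U : Finset (Sym2 Pt)} (hU : ∀ v ∈ W.erase o, s(v, p v) ∈ U) :
    ∑ e ∈ U, edgeCharge o W p c e = ∑ v ∈ W.erase o, c v :=
  sum_fiberwise_of_maps_to hU c

lemma IsParentMap.charge_le_edgeLen (hp : IsParentMap E o W p) (hc : IsStarCharge o W c)
    {v : Pt} (hv : v ∈ W.erase o) :
    c v ≤ edgeLen s(v, p v) ∧ (o ∉ s(v, p v) → c v < edgeLen s(v, p v)) := by
  obtain ⟨hle, hlt⟩ := hc.le_dist hv (hp.1 v hv).1 (hp.1 v hv).2.1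
  exact ⟨hle, fun ho => hlt fun h => ho (h ▸ Sym2.mem_mk_right _ _)⟩

/-- An edge that is a parent edge on both sides has its children in `W₁ ∩ W₂`: either one vertex
charged twice, or both endpoints. -/
lemma charge_add_charge_le_edgeLen (hp₁ : IsParentMap E o W₁ p₁) (hp₂ : IsParentMap E o W₂ p₂)
    (hc₁₂ : IsStarCharge o (W₁ ∩ W₂) (fun v => 2 * c v)) {v w : Pt} (hv : v ∈ W₁.erase o)
    (hw : w ∈ W₂.erase o) (hvw : s(w, p₂ w) = s(v, p₁ v)) :
    c v + c w ≤ edgeLen s(v, p₁ v) ∧ (o ∉ s(v, p₁ v) → c v + c w < edgeLen s(v, p₁ v)) := by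
  obtain ⟨hp₁W, hp₁v, -⟩ := hp₁.1 v hv
  obtain ⟨hp₂W, -, -⟩ := hp₂.1 w hw
  rw [edgeLen_mk]
  rcases Sym2.eq_iff.mp hvw with ⟨rfl, hp⟩ | ⟨rfl, hp⟩
  · have hv₁₂ : w ∈ (W₁ ∩ W₂).erase o := mem_erase.mpr
      ⟨(mem_erase.mp hv).1, mem_inter.mpr ⟨(mem_erase.mp hv).2, (mem_erase.mp hw).2⟩⟩
    obtain ⟨hle, hlt⟩ := hc₁₂.le_dist hv₁₂ (mem_inter.mpr ⟨hp₁W, hp ▸ hp₂W⟩) hp₁v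
    rw [← two_mul]
    exact ⟨hle, fun ho => hlt fun h => ho (h ▸ Sym2.mem_mk_right _ _)⟩
  · have hv₁₂ : v ∈ (W₁ ∩ W₂).erase o :=
      mem_erase.mpr ⟨(mem_erase.mp hv).1, mem_inter.mpr ⟨(mem_erase.mp hv).2, hp ▸ hp₂W⟩⟩
    have hw₁₂ : p₁ v ∈ (W₁ ∩ W₂).erase o :=
      mem_erase.mpr ⟨(mem_erase.mp hw).1, mem_inter.mpr ⟨hp₁W, (mem_erase.mp hw).2⟩⟩
    have h₁ := (hc₁₂ v hv₁₂).2 _ hw₁₂ hp₁v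
    have h₂ := (hc₁₂ _ hw₁₂).2 v hv₁₂ hp₁v.symm
    rw [dist_comm] at h₂
    constructor <;> intros <;> linarith

lemma edgeCharge_add_edgeCharge_le_edgeLen (hp₁ : IsParentMap E o W₁ p₁)
    (hp₂ : IsParentMap E o W₂ p₂) (hc₁ : IsStarCharge o W₁ c) (hc₂ : IsStarCharge o W₂ c)
    (hc₁₂ : IsStarCharge o (W₁ ∩ W₂) (fun v => 2 * c v)) {e : Sym2 Pt} (he : ¬ e.IsDiag) :
    edgeCharge o W₁ p₁ c e + edgeCharge o W₂ p₂ c e ≤ edgeLen e ∧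
      (o ∉ e → edgeCharge o W₁ p₁ c e + edgeCharge o W₂ p₂ c e < edgeLen e) := by
  rcases hp₁.edgeCharge_eq_zero_or c e with h₁ | ⟨v, hv, hve, h₁⟩ <;>
    rcases hp₂.edgeCharge_eq_zero_or c e with h₂ | ⟨w, hw, hwe, h₂⟩ <;> rw [h₁, h₂]
  · have := edgeLen_pos he
    constructor <;> intros <;> linarith
  · rw [zero_add, ← hwe]
    exact hp₂.charge_le_edgeLen hc₂ hw
  · rw [add_zero, ← hve]
    exact hp₁.charge_le_edgeLen hc₁ hv
  · rw [← hve] at hwe ⊢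
    exact charge_add_charge_le_edgeLen hp₁ hp₂ hc₁₂ hv hw hwe

def starEdges (o : Pt) (W : Finset Pt) : Finset (Sym2 Pt) := (W.erase o).image (fun v => s(v, o))

lemma starEdges_union (o : Pt) (W₁ W₂ : Finset Pt) :
    starEdges o (W₁ ∪ W₂) = starEdges o W₁ ∪ starEdges o W₂ := by
  rw [starEdges, erase_union_distrib, image_union, starEdges, starEdges]

lemma image_eq_starEdges (h : ∀ v ∈ W.erase o, o ∈ s(v, p v)) :
    (W.erase o).image (fun v => s(v, p v)) = starEdges o W := by
  refine image_congr fun v hv => ?_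
  rcases Sym2.mem_iff.mp (h v hv) with h' | h'
  · exact absurd h'.symm (mem_erase.mp hv).1
  · simp only [h']

theorem sum_charge_le_weight (ho₁ : o ∈ W₁) (ho₂ : o ∈ W₂) (hdiag : ∀ e ∈ E, ¬ e.IsDiag)
    (hconn₁ : ((graphOf E).induce (W₁ : Set Pt)).Connected)
    (hconn₂ : ((graphOf E).induce (W₂ : Set Pt)).Connected)
    (hc₁ : IsStarCharge o W₁ c) (hc₂ : IsStarCharge o W₂ c)
    (hc₁₂ : IsStarCharge o (W₁ ∩ W₂) (fun v => 2 * c v)) :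
    ∑ v ∈ W₁.erase o, c v + ∑ v ∈ W₂.erase o, c v ≤ weight E ∧
      (weight E ≤ ∑ v ∈ W₁.erase o, c v + ∑ v ∈ W₂.erase o, c v →
        E = starEdges o (W₁ ∪ W₂)) := by
  obtain ⟨p₁, hp₁⟩ := exists_isParentMap ho₁ hconn₁
  obtain ⟨p₂, hp₂⟩ := exists_isParentMap ho₂ hconn₂
  set U₁ := (W₁.erase o).image (fun v => s(v, p₁ v))
  set U₂ := (W₂.erase o).image (fun v => s(v, p₂ v))
  have hUE : U₁ ∪ U₂ ⊆ E := union_subset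
    (image_subset_iff.mpr fun v hv => (hp₁.1 v hv).2.2)
    (image_subset_iff.mpr fun v hv => (hp₂.1 v hv).2.2)
  have hsum : ∑ v ∈ W₁.erase o, c v + ∑ v ∈ W₂.erase o, c v =
      ∑ e ∈ U₁ ∪ U₂, (edgeCharge o W₁ p₁ c e + edgeCharge o W₂ p₂ c e) := by
    rw [sum_add_distrib, sum_edgeCharge, sum_edgeCharge]
    · exact fun v hv => mem_union_right _ (mem_image_of_mem _ hv)
    · exact fun v hv => mem_union_left _ (mem_image_of_mem _ hv)
  have hedge := fun e (he : e ∈ U₁ ∪ U₂) =>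
    edgeCharge_add_edgeCharge_le_edgeLen hp₁ hp₂ hc₁ hc₂ hc₁₂ (hdiag e (hUE he))
  have hcharge := sum_le_sum fun e he => (hedge e he).1
  have hweight : ∑ e ∈ U₁ ∪ U₂, edgeLen e ≤ weight E :=
    sum_le_sum_of_subset_of_nonneg hUE fun e _ _ => edgeLen_nonneg e
  refine ⟨hsum ▸ hcharge.trans hweight, fun hle => ?_⟩
  have hEU : E = U₁ ∪ U₂ := by
    by_contra hne
    obtain ⟨e, heE, heU⟩ := exists_of_ssubset (ssubset_of_subset_of_ne hUE (Ne.symm hne))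
    have := sum_lt_sum_of_subset hUE heE heU (edgeLen_pos (hdiag e heE))
      fun e _ _ => edgeLen_nonneg e
    rw [weight] at hle
    linarith
  have hoU : ∀ e ∈ U₁ ∪ U₂, o ∈ e := by
    by_contra! ⟨e, heU, hoe⟩
    have := sum_lt_sum (fun e he => (hedge e he).1) ⟨e, heU, (hedge e heU).2 hoe⟩
    linarith
  rw [hEU, starEdges_union, ← image_eq_starEdges, ← image_eq_starEdges]
  · exact fun v hv => hoU _ (mem_union_right _ (mem_image_of_mem _ hv))
  · exact fun v hv => hoU _ (mem_union_left _ (mem_image_of_mem _ hv))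

end Charging

lemma weight_starEdges (o : Pt) (W : Finset Pt) :
    weight (starEdges o W) = ∑ v ∈ W.erase o, dist v o := by
  rw [weight, starEdges, sum_image fun v _ w _ h => Sym2.congr_left.mp h]
  rfl

lemma connected_induce_graphOf_starEdges {o : Pt} {V W : Finset Pt} (ho : o ∈ W) (hWV : W ⊆ V) :
    ((graphOf (starEdges o V)).induce (W : Set Pt)).Connected := by
  have hreach : ∀ v : (W : Set Pt),
      ((graphOf (starEdges o V)).induce (W : Set Pt)).Reachable ⟨o, ho⟩ v := by
    rintro ⟨v, hv⟩
    by_cases hvo : v = o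
    · subst hvo
      rfl
    · refine SimpleGraph.Adj.reachable (⟨Ne.symm hvo, ?_⟩ : o ≠ v ∧ _)
      rw [Sym2.eq_swap]
      exact mem_image_of_mem _ (mem_erase.mpr ⟨hvo, hWV hv⟩)
  have : Nonempty (W : Set Pt) := ⟨⟨o, ho⟩⟩
  exact ⟨fun u v => (hreach u).symm.trans (hreach v)⟩

lemma isRBP_starEdges {R B P : Finset Pt} {o : Pt} (ho : o ∈ P) :
    IsRBP R B P (starEdges o (R ∪ B ∪ P)) := by
  refine ⟨?_, ?_, connected_induce_graphOf_starEdges (mem_union_right _ ho) ?_,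
    connected_induce_graphOf_starEdges (mem_union_right _ ho) ?_⟩
  · simp only [starEdges, mem_image, mem_erase]
    rintro _ ⟨v, ⟨hvo, -⟩, rfl⟩
    simpa using hvo
  · simp only [starEdges, mem_image, mem_erase]
    rintro _ ⟨v, ⟨-, hv⟩, rfl⟩ x hx
    rcases Sym2.mem_iff.mp hx with rfl | rfl
    · exact hv
    · exact mem_union_right _ ho
  · exact union_subset_union subset_union_left le_rfl
  · exact union_subset_union subset_union_right le_rfl

lemma card_filter_mem_starEdges {o : Pt} {W : Finset Pt} (ho : o ∈ W) :
    ((starEdges o W).filter (fun e => o ∈ e)).card = W.card - 1 := by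
  rw [filter_true_of_mem, ← card_erase_of_mem ho, starEdges,
    card_image_of_injective _ fun v w h => Sym2.congr_left.mp h]
  simp only [starEdges, mem_image]
  rintro _ ⟨v, -, rfl⟩
  exact Sym2.mem_mk_right _ _

section Hub

variable {R B P X : Finset Pt} {o : Pt}

def StrictlyNearest (o : Pt) (V W : Finset Pt) : Prop :=
  ∀ v ∈ V, ∀ u ∈ W, u ≠ v → u ≠ o → dist v o < dist v u

/-- Purple points are reached from both the red and the blue side, so each side is charged
only half of their distance to the hub. -/
def hubCharge (o : Pt) (P : Finset Pt) (v : Pt) : ℝ := if v ∈ P then dist v o / 2 else dist v o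

lemma isStarCharge_hubCharge (hX : StrictlyNearest o X (X ∪ P)) (hP : StrictlyNearest o P P)
    (hPX : ∀ v ∈ P, ∀ u ∈ X, dist v o < 2 * dist v u) :
    IsStarCharge o (X ∪ P) (hubCharge o P) := by
  intro v hv
  obtain ⟨hvo, hvXP⟩ := mem_erase.mp hv
  have hpos : 0 < dist v o := dist_pos.mpr hvo
  unfold hubCharge
  split_ifs with hvP
  · refine ⟨by linarith, fun u hu huv => ?_⟩
    obtain ⟨huo, huXP⟩ := mem_erase.mp hu
    rcases mem_union.mp huXP with huX | huP
    · linarith [hPX v hvP u huX]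
    · linarith [hP v hvP u huP huv huo]
  · refine ⟨le_rfl, fun u hu huv => ?_⟩
    obtain ⟨huo, huXP⟩ := mem_erase.mp hu
    exact hX v ((mem_union.mp hvXP).resolve_right hvP) u huXP huv huo

lemma isStarCharge_two_mul_hubCharge (hRB : Disjoint R B) (hP : StrictlyNearest o P P) :
    IsStarCharge o ((R ∪ P) ∩ (B ∪ P)) (fun v => 2 * hubCharge o P v) := by
  rw [← inter_union_distrib_right, disjoint_iff_inter_eq_empty.mp hRB, empty_union]
  intro v hv
  obtain ⟨hvo, hvP⟩ := mem_erase.mp hv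
  simp only [hubCharge, if_pos hvP]
  refine ⟨by linarith, fun u hu huv => ?_⟩
  obtain ⟨huo, huP⟩ := mem_erase.mp hu
  linarith [hP v hvP u huP huv huo]

lemma sum_hubCharge (hRB : Disjoint R B) (hRP : Disjoint R P) (hBP : Disjoint B P)
    (ho : o ∈ P) :
    ∑ v ∈ (R ∪ P).erase o, hubCharge o P v + ∑ v ∈ (B ∪ P).erase o, hubCharge o P v =
      weight (starEdges o (R ∪ B ∪ P)) := by
  have hoR : o ∉ R := disjoint_right.mp hRP ho
  have hoB : o ∉ B := disjoint_right.mp hBP ho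
  have hR : ∑ v ∈ R, hubCharge o P v = ∑ v ∈ R, dist v o :=
    sum_congr rfl fun v hv => if_neg (disjoint_left.mp hRP hv)
  have hB : ∑ v ∈ B, hubCharge o P v = ∑ v ∈ B, dist v o :=
    sum_congr rfl fun v hv => if_neg (disjoint_left.mp hBP hv)
  have hP : ∑ v ∈ P.erase o, hubCharge o P v = ∑ v ∈ P.erase o, dist v o / 2 :=
    sum_congr rfl fun v hv => if_pos (mem_of_mem_erase hv)
  have hRP' : Disjoint R (P.erase o) := hRP.mono_right (erase_subset _ _)
  have hBP' : Disjoint B (P.erase o) := hBP.mono_right (erase_subset _ _)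
  rw [weight_starEdges, erase_union_distrib, erase_union_distrib, erase_union_distrib,
    erase_union_distrib, erase_eq_of_notMem hoR, erase_eq_of_notMem hoB, sum_union hRP',
    sum_union hBP', sum_union (disjoint_union_left.mpr ⟨hRP', hBP'⟩), sum_union hRB, hR, hB, hP]
  linarith [sum_div (P.erase o) (fun v => dist v o) 2]

theorem starEdges_isMinRBP_unique (hRB : Disjoint R B) (hRP : Disjoint R P) (hBP : Disjoint B P)
    (ho : o ∈ P) (hR : StrictlyNearest o R (R ∪ P)) (hB : StrictlyNearest o B (B ∪ P))
    (hP : StrictlyNearest o P P) (hPRB : ∀ v ∈ P, ∀ u ∈ R ∪ B, dist v o < 2 * dist v u) :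
    IsMinRBP R B P (starEdges o (R ∪ B ∪ P)) ∧
      ∀ E, IsMinRBP R B P E → E = starEdges o (R ∪ B ∪ P) := by
  have hcharge : ∀ E, IsRBP R B P E → weight (starEdges o (R ∪ B ∪ P)) ≤ weight E ∧
      (weight E ≤ weight (starEdges o (R ∪ B ∪ P)) → E = starEdges o (R ∪ B ∪ P)) := by
    rintro E ⟨hdiag, -, hconnR, hconnB⟩
    have h := sum_charge_le_weight (mem_union_right R ho) (mem_union_right B ho) hdiag hconnR
      hconnB (isStarCharge_hubCharge hR hP fun v hv u hu => hPRB v hv u (mem_union_left _ hu))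
      (isStarCharge_hubCharge hB hP fun v hv u hu => hPRB v hv u (mem_union_right _ hu))
      (isStarCharge_two_mul_hubCharge hRB hP)
    rwa [sum_hubCharge hRB hRP hBP ho, union_union_union_comm, union_self] at h
  exact ⟨⟨isRBP_starEdges ho, fun E hE => (hcharge E hE).1⟩,
    fun E hE => (hcharge E hE.1).2 (hE.2 _ (isRBP_starEdges ho))⟩

end Hub

def sqDist (a b : ℤ × ℤ) : ℤ := (a.1 - b.1) ^ 2 + (a.2 - b.2) ^ 2

def toPt (a : ℤ × ℤ) : Pt := !₂[(a.1 : ℝ), (a.2 : ℝ)]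

lemma toPt_injective : Function.Injective toPt := by
  intro a b h
  have h₀ := congrArg (fun x : Pt => x 0) h
  have h₁ := congrArg (fun x : Pt => x 1) h
  simp only [toPt, Matrix.cons_val_zero, Matrix.cons_val_one, Matrix.cons_val_fin_one,
    Int.cast_inj] at h₀ h₁
  exact Prod.ext h₀ h₁

lemma sq_dist_toPt (a b : ℤ × ℤ) : dist (toPt a) (toPt b) ^ 2 = sqDist a b := by
  rw [EuclideanSpace.dist_eq, Real.sq_sqrt (by positivity)]
  simp [toPt, sqDist, Fin.sum_univ_two, Real.dist_eq, sq_abs]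

lemma strictlyNearest_image {V W : Finset (ℤ × ℤ)}
    (h : ∀ a ∈ V, ∀ b ∈ W, b ≠ a → b ≠ 0 → sqDist a 0 < sqDist a b) :
    StrictlyNearest (toPt 0) (V.image toPt) (W.image toPt) := by
  simp only [StrictlyNearest, forall_mem_image, toPt_injective.ne_iff]
  intro a ha b hb hba hb0
  refine lt_of_pow_lt_pow_left₀ 2 dist_nonneg ?_
  rw [sq_dist_toPt, sq_dist_toPt]
  exact_mod_cast h a ha b hb hba hb0

lemma dist_lt_two_mul_dist_image {V W : Finset (ℤ × ℤ)}
    (h : ∀ a ∈ V, ∀ b ∈ W, sqDist a 0 < 4 * sqDist a b) :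
    ∀ v ∈ V.image toPt, ∀ u ∈ W.image toPt, dist v (toPt 0) < 2 * dist v u := by
  simp only [forall_mem_image]
  intro a ha b hb
  refine lt_of_pow_lt_pow_left₀ 2 (by positivity) ?_
  rw [mul_pow, sq_dist_toPt, sq_dist_toPt, show (2 : ℝ) ^ 2 = 4 by norm_num]
  exact_mod_cast h a ha b hb

/-- Regular pentagons are approximated by Gaussian integers: the red points are `r ζ ^ k`
(`k < 5`) with `ζ = (7 + 24 i) / 25`, a rotation by about `73.7°`, the blue ones are `(4 + 3 i) / 5`
times the red ones and the outer purple ones `3` times the red ones. The radius `r = 5 ^ 9`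
makes all of them integral, so that every squared distance is an integer. -/
def redZ : Finset (ℤ × ℤ) :=
  {(1953125, 0), (546875, 1875000), (-1646875, 1050000), (-1469125, -1287000),
    (824165, -1770720)}

def blueZ : Finset (ℤ × ℤ) :=
  {(1562500, 1171875), (-687500, 1828125), (-1947500, -148125), (-403100, -1911075),
    (1721764, -922077)}

def purpleZ : Finset (ℤ × ℤ) :=
  {0, (5859375, 0), (1640625, 5625000), (-4940625, 3150000), (-4407375, -3861000),
    (2472495, -5312160)}

/-- there exist pairwise disjoint finite sets `R`, `B`, `P` of points
in the plane whose minimum red-blue-purple spanning graph is unique and has a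
vertex of degree 15. -/
theorem exists_unique_minRBP_with_degree_15 :
    ∃ (R B P : Finset Pt) (E : Finset (Sym2 Pt)) (x : Pt),
      Disjoint R B ∧ Disjoint R P ∧ Disjoint B P ∧
      IsMinRBP R B P E ∧ (∀ E' : Finset (Sym2 Pt), IsMinRBP R B P E' → E' = E) ∧
      (E.filter (fun e => x ∈ e)).card = 15 := by
  have hRB : Disjoint (redZ.image toPt) (blueZ.image toPt) :=
    (disjoint_image toPt_injective).mpr (by decide)
  have hRP : Disjoint (redZ.image toPt) (purpleZ.image toPt) :=
    (disjoint_image toPt_injective).mpr (by decide)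
  have hBP : Disjoint (blueZ.image toPt) (purpleZ.image toPt) :=
    (disjoint_image toPt_injective).mpr (by decide)
  have ho : toPt 0 ∈ purpleZ.image toPt := mem_image_of_mem _ (by decide)
  obtain ⟨hmin, hunique⟩ := starEdges_isMinRBP_unique hRB hRP hBP ho
    (by rw [← image_union]; exact strictlyNearest_image (by decide))
    (by rw [← image_union]; exact strictlyNearest_image (by decide))
    (strictlyNearest_image (by decide))
    (by rw [← image_union]; exact dist_lt_two_mul_dist_image (by decide))
  refine ⟨_, _, _, _, toPt 0, hRB, hRP, hBP, hmin, hunique, ?_⟩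
  rw [card_filter_mem_starEdges (mem_union_right _ ho), ← image_union, ← image_union,
    card_image_of_injective _ toPt_injective]
  decide
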